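/- arXiv:1803.11310 — 3 statements merged into one kernel-verified Lean document; each statement's English description precedes it below -/
import Mathlib

section
/- For all vectors x, y in R^n and 1 < p < 2, there exists a constant c_p > 0 such that ⟨|x|^{p-2}x - |y|^{p-2}y, x - y⟩ ≥ c_p |x - y|^2 (|x| + |y|)^{p-2} whenever (x,y) ≠ (0,0). -/
/-!
By symmetry let `a = ‖x‖ ≥ b = ‖y‖` and `t = ‖x‖‖y‖ - ⟪x, y⟫ ≥ 0`. Then
`⟪a^{p-2} x - b^{p-2} y, x - y⟫ = (a^{p-1} - b^{p-1})(a - b) + (a^{p-2} + b^{p-2}) t` and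
`‖x - y‖² = (a - b)² + 2t`, so the claim with `c_p = (p - 1)/2` splits into a radial part,
`(p - 1)(a + b)^{p-2}(a - b) ≤ a^{p-1} - b^{p-1}`, which is the tangent line bound for the concave
function `r ↦ r^{p-1}`, and an angular part, `(p - 1)(a + b)^{p-2} ≤ a^{p-2}`.
-/

open Real

namespace Real

lemma rpow_le_rpow_add_mul_rpow_sub_one_mul_sub {s a b : ℝ} (hs0 : 0 ≤ s) (hs1 : s ≤ 1)
    (ha : 0 < a) (hb : 0 ≤ b) :
    b ^ s ≤ a ^ s + s * a ^ (s - 1) * (b - a) := by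
  have h := rpow_one_add_le_one_add_mul_self (s := b / a - 1)
    (by linarith [div_nonneg hb ha.le]) hs0 hs1
  rw [add_sub_cancel, div_rpow hb ha.le, div_le_iff₀ (rpow_pos_of_pos ha s)] at h
  calc b ^ s ≤ (1 + s * (b / a - 1)) * a ^ s := h
    _ = a ^ s + s * (a ^ s / a) * (b - a) := by field_simp
    _ = a ^ s + s * a ^ (s - 1) * (b - a) := by rw [rpow_sub_one ha.ne']

lemma mul_rpow_sub_one_mul_sub_le_rpow_sub_rpow {s a b : ℝ} (hs0 : 0 ≤ s) (hs1 : s ≤ 1)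
    (hb : 0 ≤ b) (hba : b ≤ a) (ha : 0 < a) :
    s * (a + b) ^ (s - 1) * (a - b) ≤ a ^ s - b ^ s := by
  have htangent := rpow_le_rpow_add_mul_rpow_sub_one_mul_sub hs0 hs1 ha hb
  have hmono : (a + b) ^ (s - 1) ≤ a ^ (s - 1) :=
    rpow_le_rpow_of_nonpos ha (by linarith) (by linarith)
  nlinarith [mul_le_mul_of_nonneg_left hmono (mul_nonneg hs0 (sub_nonneg.2 hba))]

end Real

section InnerProductSpace

variable {E : Type*} [NormedAddCommGroup E] [InnerProductSpace ℝ E]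

lemma inner_smul_sub_smul_sub_sub (A B : ℝ) (x y : E) :
    inner ℝ (A • x - B • y) (x - y) =
      (A * ‖x‖ - B * ‖y‖) * (‖x‖ - ‖y‖) + (A + B) * (‖x‖ * ‖y‖ - inner ℝ x y) := by
  simp only [inner_sub_left, inner_sub_right, real_inner_smul_left,
    real_inner_self_eq_norm_sq, real_inner_comm y x]
  ring

lemma norm_sub_sq_eq_sq_sub_norm_add (x y : E) :
    ‖x - y‖ ^ 2 = (‖x‖ - ‖y‖) ^ 2 + 2 * (‖x‖ * ‖y‖ - inner ℝ x y) := by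
  rw [norm_sub_sq_real]
  ring

lemma half_mul_norm_sub_sq_mul_rpow_le_inner {p : ℝ} (hp1 : 1 < p) (hp2 : p < 2) {x y : E}
    (hyx : ‖y‖ ≤ ‖x‖) (hx : x ≠ 0) :
    (p - 1) / 2 * ‖x - y‖ ^ 2 * (‖x‖ + ‖y‖) ^ (p - 2) ≤
      inner ℝ (‖x‖ ^ (p - 2) • x - ‖y‖ ^ (p - 2) • y) (x - y) := by
  rw [inner_smul_sub_smul_sub_sub, norm_sub_sq_eq_sq_sub_norm_add]
  have ht : 0 ≤ ‖x‖ * ‖y‖ - inner ℝ x y := sub_nonneg.2 (real_inner_le_norm x y)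
  set t := ‖x‖ * ‖y‖ - inner ℝ x y
  set a := ‖x‖
  set b := ‖y‖
  have ha : 0 < a := norm_pos_iff.2 hx
  have hb : 0 ≤ b := norm_nonneg y
  have hS : 0 ≤ (a + b) ^ (p - 2) := rpow_nonneg (by positivity) _
  have hB : 0 ≤ b ^ (p - 2) := rpow_nonneg hb _
  have hSA : (a + b) ^ (p - 2) ≤ a ^ (p - 2) :=
    rpow_le_rpow_of_nonpos ha (by linarith) (by linarith)
  have hradial : (p - 1) * (a + b) ^ (p - 2) * (a - b) ≤ a ^ (p - 2) * a - b ^ (p - 2) * b := by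
    have hp : p - 2 + 1 ≠ 0 := by linarith
    rw [← rpow_add_one' ha.le hp, ← rpow_add_one' hb hp, show p - 2 + 1 = p - 1 by ring]
    simpa only [show p - 1 - 1 = p - 2 by ring] using
      mul_rpow_sub_one_mul_sub_le_rpow_sub_rpow (s := p - 1) (by linarith) (by linarith) hb hyx ha
  nlinarith [mul_le_mul_of_nonneg_right hradial (sub_nonneg.2 hyx),
    mul_nonneg (mul_nonneg (by linarith : (0 : ℝ) ≤ p - 1) hS) (sq_nonneg (a - b)),
    mul_nonneg (sub_nonneg.2 hSA) ht,
    mul_nonneg (mul_nonneg (by linarith : (0 : ℝ) ≤ 2 - p) hS) ht, mul_nonneg hB ht]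

end InnerProductSpace

/-- Strong monotonicity of the p-Laplacian map for `1 < p < 2`:
there is `c_p > 0` with
`⟨|x|^{p-2}x - |y|^{p-2}y, x - y⟩ ≥ c_p |x - y|^2 (|x| + |y|)^{p-2}`
whenever `(x, y) ≠ (0, 0)`. -/
theorem plap_monotone_p_lt_two (n : ℕ) (p : ℝ) (hp1 : 1 < p) (hp2 : p < 2) :
    ∃ c : ℝ, 0 < c ∧ ∀ x y : EuclideanSpace ℝ (Fin n), ¬ (x = 0 ∧ y = 0) →
      c * ‖x - y‖ ^ 2 * (‖x‖ + ‖y‖) ^ (p - 2) ≤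
        (inner ℝ (‖x‖ ^ (p - 2) • x - ‖y‖ ^ (p - 2) • y) (x - y) : ℝ) := by
  refine ⟨(p - 1) / 2, by linarith, fun x y hxy => ?_⟩
  wlog hyx : ‖y‖ ≤ ‖x‖ generalizing x y
  · have hswap := this y x (fun h => hxy h.symm) (by linarith)
    rwa [norm_sub_rev, add_comm ‖y‖, ← neg_sub x y, ← neg_sub (‖x‖ ^ (p - 2) • x),
      inner_neg_neg] at hswap
  have hx : x ≠ 0 := by
    rintro rfl
    exact hxy ⟨rfl, norm_le_zero_iff.1 (by simpa using hyx)⟩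
  exact half_mul_norm_sub_sq_mul_rpow_le_inner hp1 hp2 hyx hx
end

section
/- Let 1 < p' < 2 (equivalently p ≥ 2 for the conjugate exponent p). Then there exists a constant c > 0 such that for all u, v in R^n, ||u|^{p'-2}u - |v|^{p'-2}v| ≤ c |u - v|^{p'-1}. -/
open Real

private lemma mvt_rpow (p' t r : ℝ) (hp1 : 1 < p') (hp2 : p' < 2) (ht : 0 < t) (htr : t ≤ r) :
    t ^ (p' - 2) - r ^ (p' - 2) ≤ (2 - p') * t ^ (p' - 3) * (r - t) := by
  set b : ℝ := 2 - p' with hb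
  have hb0 : 0 < b := by simp [hb]; linarith
  have hb1 : b < 1 := by simp [hb]; linarith
  have hr : 0 < r := lt_of_lt_of_le ht htr
  have hA : 0 < t ^ b := rpow_pos_of_pos ht b
  have hB : 0 < r ^ b := rpow_pos_of_pos hr b
  have hAB : t ^ b ≤ r ^ b := rpow_le_rpow ht.le htr hb0.le
  -- Bernoulli
  have bern : (r / t) ^ b ≤ 1 + b * (r / t - 1) := by
    have h0 : (0:ℝ) ≤ r / t := by positivity
    have h := rpow_one_add_le_one_add_mul_self (s := r / t - 1)
      (by linarith) hb0.le hb1.le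
    have e : 1 + (r / t - 1) = r / t := by ring
    rwa [e] at h
  have hdiv : (r / t) ^ b = r ^ b / t ^ b := div_rpow hr.le ht.le b
  rw [hdiv] at bern
  have key' : t * r ^ b ≤ t * t ^ b + b * t ^ b * (r - t) := by
    have h := mul_le_mul_of_nonneg_left bern (le_of_lt (mul_pos ht hA))
    have e1 : t * t ^ b * (r ^ b / t ^ b) = t * r ^ b := by field_simp
    have e2 : t * t ^ b * (1 + b * (r / t - 1)) = t * t ^ b + b * t ^ b * (r - t) := by
      field_simp
    rw [e1, e2] at h
    exact h
  -- rewrite goal in terms of inverses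
  have e3 : t ^ (p' - 2) = (t ^ b)⁻¹ := by
    rw [show (p':ℝ) - 2 = -b by rw [hb]; ring, rpow_neg ht.le]
  have e4 : r ^ (p' - 2) = (r ^ b)⁻¹ := by
    rw [show (p':ℝ) - 2 = -b by rw [hb]; ring, rpow_neg hr.le]
  have e5 : t ^ (p' - 3) = (t ^ b * t)⁻¹ := by
    rw [show (p':ℝ) - 3 = -(b + 1) by rw [hb]; ring, rpow_neg ht.le,
      Real.rpow_add_one ht.ne' b]
  rw [e3, e4, e5]
  rw [← sub_nonneg]
  have expand : b * (t ^ b * t)⁻¹ * (r - t) - ((t ^ b)⁻¹ - (r ^ b)⁻¹) =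
      (b * (r ^ b) * (r - t) - (t * r ^ b - t * t ^ b)) / (t ^ b * r ^ b * t) := by
    field_simp
  rw [expand]
  apply div_nonneg _ (by positivity)
  nlinarith [mul_le_mul_of_nonneg_right hAB (mul_nonneg hb0.le (by linarith : (0:ℝ) ≤ r - t))]

private lemma holder_half (n : ℕ) (p' : ℝ) (hp1 : 1 < p') (hp2 : p' < 2)
    (u v : EuclideanSpace ℝ (Fin n)) (hvu : ‖v‖ ≤ ‖u‖) :
    ‖(‖u‖ ^ (p' - 2) • u - ‖v‖ ^ (p' - 2) • v : EuclideanSpace ℝ (Fin n))‖ ≤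
      3 * ‖u - v‖ ^ (p' - 1) := by
  rcases eq_or_ne u v with rfl | huv
  · simp [Real.zero_rpow (by linarith : p' - 1 ≠ 0)]
  have hd : 0 < ‖u - v‖ := by
    rw [norm_pos_iff]; exact sub_ne_zero.mpr huv
  set r := ‖u‖ with hr
  set t := ‖v‖ with htdef
  set d := ‖u - v‖ with hddef
  have ht0 : 0 ≤ t := norm_nonneg v
  have hr0 : 0 ≤ r := norm_nonneg u
  have hs0 : 0 < p' - 1 := by linarith
  have hs1 : p' - 1 ≤ 1 := by linarith
  have hnorm_pow : ∀ w : EuclideanSpace ℝ (Fin n),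
      ‖(‖w‖ ^ (p' - 2) • w : EuclideanSpace ℝ (Fin n))‖ = ‖w‖ ^ (p' - 1) := by
    intro w
    rcases eq_or_ne w 0 with rfl | hw
    · simp [Real.zero_rpow (by linarith : p' - 1 ≠ 0)]
    · rw [norm_smul, Real.norm_eq_abs, abs_of_nonneg (rpow_nonneg (norm_nonneg w) _)]
      rw [← Real.rpow_add_one (norm_ne_zero_iff.mpr hw) (p' - 2)]
      congr 1; ring
  have hrtd : r - t ≤ d := norm_sub_norm_le u v
  rcases le_or_gt t d with hcase | hcase
  · -- easy case : ‖v‖ ≤ ‖u - v‖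
    have h1 : ‖(‖u‖ ^ (p' - 2) • u - ‖v‖ ^ (p' - 2) • v : EuclideanSpace ℝ (Fin n))‖ ≤
        r ^ (p' - 1) + t ^ (p' - 1) := by
      calc _ ≤ ‖(‖u‖ ^ (p' - 2) • u : EuclideanSpace ℝ (Fin n))‖ +
            ‖(‖v‖ ^ (p' - 2) • v : EuclideanSpace ℝ (Fin n))‖ := norm_sub_le _ _
        _ = r ^ (p' - 1) + t ^ (p' - 1) := by rw [hnorm_pow u, hnorm_pow v]
    have hr2d : r ≤ 2 * d := by linarith
    have h2 : r ^ (p' - 1) ≤ 2 * d ^ (p' - 1) := by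
      calc r ^ (p' - 1) ≤ (2 * d) ^ (p' - 1) := rpow_le_rpow hr0 hr2d hs0.le
        _ = 2 ^ (p' - 1) * d ^ (p' - 1) := mul_rpow (by norm_num) hd.le
        _ ≤ 2 * d ^ (p' - 1) := by
            have : (2:ℝ) ^ (p' - 1) ≤ 2 ^ (1:ℝ) :=
              rpow_le_rpow_of_exponent_le (by norm_num) hs1
            rw [Real.rpow_one] at this
            exact mul_le_mul_of_nonneg_right this (rpow_nonneg hd.le _)
    have h3 : t ^ (p' - 1) ≤ d ^ (p' - 1) := rpow_le_rpow ht0 hcase hs0.le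
    linarith
  · -- hard case : ‖u - v‖ < ‖v‖ ≤ ‖u‖
    have ht : 0 < t := lt_trans hd hcase
    have htr : t ≤ r := hvu
    have hrp : 0 < r := lt_of_lt_of_le ht htr
    have hdt : d ≤ t := hcase.le
    have hdr : d ≤ r := le_trans hdt htr
    have hid : (‖u‖ ^ (p' - 2) • u - ‖v‖ ^ (p' - 2) • v : EuclideanSpace ℝ (Fin n)) =
        ‖u‖ ^ (p' - 2) • (u - v) + (‖u‖ ^ (p' - 2) - ‖v‖ ^ (p' - 2)) • v := by
      rw [smul_sub, sub_smul]; abel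
    rw [hid]
    have hterm1 : ‖(‖u‖ ^ (p' - 2) • (u - v) : EuclideanSpace ℝ (Fin n))‖ ≤ d ^ (p' - 1) := by
      rw [norm_smul, Real.norm_eq_abs, abs_of_nonneg (rpow_nonneg hr0 _)]
      have : r ^ (p' - 2) ≤ d ^ (p' - 2) :=
        rpow_le_rpow_of_nonpos hd hdr (by linarith)
      calc r ^ (p' - 2) * d ≤ d ^ (p' - 2) * d :=
            mul_le_mul_of_nonneg_right this hd.le
        _ = d ^ (p' - 1) := by
            rw [← Real.rpow_add_one hd.ne' (p' - 2)]; congr 1; ring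
    have hterm2 : ‖((‖u‖ ^ (p' - 2) - ‖v‖ ^ (p' - 2)) • v : EuclideanSpace ℝ (Fin n))‖ ≤
        d ^ (p' - 1) := by
      rw [norm_smul, Real.norm_eq_abs]
      have hle : r ^ (p' - 2) ≤ t ^ (p' - 2) :=
        rpow_le_rpow_of_nonpos ht htr (by linarith)
      rw [abs_of_nonpos (by linarith)]
      have hmvt := mvt_rpow p' t r hp1 hp2 ht htr
      have step1 : (-(r ^ (p' - 2) - t ^ (p' - 2))) * t ≤ (2 - p') * t ^ (p' - 2) * (r - t) := by
        have : (2 - p') * t ^ (p' - 3) * (r - t) * t = (2 - p') * t ^ (p' - 2) * (r - t) := by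
          rw [show (p':ℝ) - 2 = (p' - 3) + 1 by ring, Real.rpow_add_one ht.ne']
          ring
        nlinarith [mul_le_mul_of_nonneg_right hmvt ht.le]
      have step2 : (2 - p') * t ^ (p' - 2) * (r - t) ≤ (2 - p') * t ^ (p' - 2) * d :=
        mul_le_mul_of_nonneg_left hrtd
          (mul_nonneg (by linarith) (rpow_nonneg ht0 _))
      have step3 : (2 - p') * t ^ (p' - 2) * d ≤ (2 - p') * d ^ (p' - 2) * d := by
        have : t ^ (p' - 2) ≤ d ^ (p' - 2) :=
          rpow_le_rpow_of_nonpos hd hdt (by linarith)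
        have h2p : (0:ℝ) ≤ 2 - p' := by linarith
        exact mul_le_mul_of_nonneg_right (mul_le_mul_of_nonneg_left this h2p) hd.le
      have step4 : (2 - p') * d ^ (p' - 2) * d ≤ d ^ (p' - 1) := by
        have e : d ^ (p' - 2) * d = d ^ (p' - 1) := by
          rw [← Real.rpow_add_one hd.ne' (p' - 2)]; congr 1; ring
        have h2p : (2 - p') ≤ 1 := by linarith
        nlinarith [rpow_nonneg hd.le (p' - 1)]
      linarith
    calc _ ≤ ‖(‖u‖ ^ (p' - 2) • (u - v) : EuclideanSpace ℝ (Fin n))‖ +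
          ‖((‖u‖ ^ (p' - 2) - ‖v‖ ^ (p' - 2)) • v : EuclideanSpace ℝ (Fin n))‖ := norm_add_le _ _
      _ ≤ d ^ (p' - 1) + d ^ (p' - 1) := add_le_add hterm1 hterm2
      _ ≤ 3 * d ^ (p' - 1) := by nlinarith [rpow_nonneg hd.le (p' - 1)]

/-- For `1 < p' < 2` there is `c > 0` with
`| |u|^{p'-2}u - |v|^{p'-2}v | ≤ c |u - v|^{p'-1}` for all `u v : ℝⁿ`. -/
theorem a_p_holder_estimate (n : ℕ) (p' : ℝ) (hp1 : 1 < p') (hp2 : p' < 2) :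
    ∃ c : ℝ, 0 < c ∧ ∀ u v : EuclideanSpace ℝ (Fin n),
      ‖(‖u‖ ^ (p' - 2) • u - ‖v‖ ^ (p' - 2) • v : EuclideanSpace ℝ (Fin n))‖ ≤
        c * ‖u - v‖ ^ (p' - 1) := by
  refine ⟨3, by norm_num, fun u v => ?_⟩
  rcases le_total ‖v‖ ‖u‖ with h | h
  · exact holder_half n p' hp1 hp2 u v h
  · have := holder_half n p' hp1 hp2 v u h
    rwa [norm_sub_rev, norm_sub_rev v u] at this
end

section
/- Let g, Y*, θ be as in the averaging setup, let Ω = (0,1) × (0,g_1), and Ω^ε = {(x1,x2) : 0 < x1 < 1, 0 < x2 < g(x1/ε)}. Then the characteristic functions χ_{Ω^ε} converge weakly-* in L^∞(Ω) to the function (x1,x2) ↦ θ(x2), that is, ∫_Ω χ_{Ω^ε}(x1,x2) φ(x1,x2) dx1dx2 → ∫_Ω θ(x2) φ(x1,x2) dx1dx2 for every φ ∈ L^1(Ω). -/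
open MeasureTheory Filter Set Topology

/-!
For a fixed height `y`, the slice `h s = [y < g s]` of `χ_{Y*}` is bounded and `L`-periodic, so
`t ↦ h (t / ε)` converges weakly-* to its mean `θ y`. On an interval `[a, b]` this is because
`x ↦ ∫₀ˣ h - x ⨍ h` is continuous and periodic, hence bounded, and
`∫ₐᵇ h (t / ε) dt = (b - a) ⨍ h + ε (O(1))`. Riemann sums pass from intervals to continuous
test functions, and density of compactly supported continuous functions in `L¹` to all of `L¹`.
Fubini and dominated convergence in `y`, with dominating function `y ↦ ∫₀¹ |φ (t, y)| dt`, then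
give the statement on the rectangle.
-/

theorem tendsto_of_forall_approx {ι X : Type*} [PseudoMetricSpace X] {l : Filter ι}
    {f : ι → X} {a : X} (K : ℝ)
    (h : ∀ δ > 0, ∃ (G : ι → X) (b : X), Tendsto G l (𝓝 b) ∧ dist b a ≤ K * δ ∧
      ∀ᶠ i in l, dist (f i) (G i) ≤ K * δ) :
    Tendsto f l (𝓝 a) := by
  refine Metric.tendsto_nhds.2 fun ε hε => ?_
  obtain ⟨G, b, hG, hba, hfG⟩ := h (ε / (3 * (|K| + 1))) (by positivity)
  have hKδ : K * (ε / (3 * (|K| + 1))) < ε / 3 := by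
    rw [← mul_div_assoc, div_lt_div_iff₀ (by positivity) (by norm_num)]
    nlinarith [le_abs_self K]
  filter_upwards [Metric.tendsto_nhds.1 hG (ε / 3) (by positivity), hfG] with i hGb hfGi
  calc dist (f i) a ≤ dist (f i) (G i) + dist (G i) b + dist b a := dist_triangle4 _ _ _ _
    _ < ε := by linarith

theorem abs_intervalAverage_le {f : ℝ → ℝ} {a b C : ℝ} (hC : ∀ x, |f x| ≤ C) :
    |⨍ x in a..b, f x| ≤ C := by
  rcases eq_or_ne a b with rfl | hab
  · simpa using (abs_nonneg _).trans (hC 0)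
  rw [interval_average_eq, smul_eq_mul, abs_mul, abs_inv,
    inv_mul_le_iff₀ (abs_pos.2 (sub_ne_zero.2 hab.symm)), mul_comm]
  exact intervalIntegral.norm_integral_le_of_norm_le_const fun x _ => (Real.norm_eq_abs _).trans_le (hC x)

section RiemannSum

variable {w ψ : ℝ → ℝ} {C δ : ℝ}

theorem exists_partition_forall_abs_sub_le {a b : ℝ} (hab : a ≤ b)
    (hψ : ContinuousOn ψ (Icc a b)) (hδ : 0 < δ) :
    ∃ (N : ℕ) (t : ℕ → ℝ), Monotone t ∧ t 0 = a ∧ t N = b ∧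
      ∀ k < N, ∀ x ∈ Icc (t k) (t (k + 1)), |ψ x - ψ (t k)| ≤ δ := by
  obtain ⟨η, hη, hψη⟩ := Metric.uniformContinuousOn_iff_le.1
    (isCompact_Icc.uniformContinuousOn_of_continuous hψ) δ hδ
  obtain ⟨N, hN⟩ := exists_nat_gt ((b - a) / η)
  have hN0 : (0 : ℝ) < N := (div_nonneg (sub_nonneg.2 hab) hη.le).trans_lt hN
  have hmesh : (b - a) / N ≤ η := by
    rw [div_le_iff₀ hN0]; rw [div_lt_iff₀ hη] at hN; linarith
  set t : ℕ → ℝ := fun k => a + k * ((b - a) / N)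
  have hmono : Monotone t := fun i j hij => by
    have : (i : ℝ) ≤ j := Nat.cast_le.2 hij
    simp only [t]; gcongr
  have htN : t N = b := by simp only [t]; field_simp; ring
  have hmem : ∀ k ≤ N, t k ∈ Icc a b := fun k hk =>
    ⟨by simpa [t] using hmono (Nat.zero_le k), htN ▸ hmono hk⟩
  refine ⟨N, t, hmono, by simp [t], htN, fun k hk x hx => ?_⟩
  have hx' : x ∈ Icc a b := ⟨(hmem k hk.le).1.trans hx.1, hx.2.trans (hmem (k + 1) hk).2⟩
  have hdist : dist x (t k) ≤ η := by
    rw [Real.dist_eq, abs_of_nonneg (sub_nonneg.2 hx.1)]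
    have : t (k + 1) - t k = (b - a) / N := by simp only [t]; push_cast; ring
    linarith [hx.2]
  simpa [Real.dist_eq] using hψη x hx' (t k) (hmem k hk.le) hdist

theorem abs_intervalIntegral_mul_sub_sum_le {N : ℕ} {t : ℕ → ℝ} (ht : Monotone t)
    (hw : ∀ c d, IntervalIntegrable w volume c d) (hC : ∀ x, |w x| ≤ C)
    (hψc : ContinuousOn ψ (Icc (t 0) (t N)))
    (hψ : ∀ k < N, ∀ x ∈ Icc (t k) (t (k + 1)), |ψ x - ψ (t k)| ≤ δ) :
    |(∫ x in t 0..t N, w x * ψ x) -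
        ∑ k ∈ Finset.range N, ψ (t k) * ∫ x in t k..t (k + 1), w x|
      ≤ C * (t N - t 0) * δ := by
  have hint : ∀ k < N, IntervalIntegrable (fun x => w x * ψ x) volume (t k) (t (k + 1)) :=
    fun k hk => (hw _ _).mul_continuousOn <| by
      rw [uIcc_of_le (ht k.le_succ)]
      exact hψc.mono (Icc_subset_Icc (ht (Nat.zero_le k)) (ht hk))
  have hterm : ∀ k < N, |(∫ x in t k..t (k + 1), w x * ψ x) -
      ψ (t k) * ∫ x in t k..t (k + 1), w x| ≤ C * δ * (t (k + 1) - t k) := by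
    intro k hk
    rw [← intervalIntegral.integral_const_mul,
      ← intervalIntegral.integral_sub (hint k hk) ((hw _ _).const_mul _)]
    have hle := intervalIntegral.norm_integral_le_of_norm_le_const (C := C * δ)
      (f := fun x => w x * ψ x - ψ (t k) * w x) (a := t k) (b := t (k + 1)) fun x hx => ?_
    · rwa [Real.norm_eq_abs, abs_of_nonneg (sub_nonneg.2 (ht k.le_succ))] at hle
    rw [uIoc_of_le (ht k.le_succ)] at hx
    rw [Real.norm_eq_abs, show w x * ψ x - ψ (t k) * w x = w x * (ψ x - ψ (t k)) by ring, abs_mul]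
    exact mul_le_mul (hC x) (hψ k hk x (Ioc_subset_Icc_self hx)) (abs_nonneg _)
      ((abs_nonneg _).trans (hC x))
  rw [← intervalIntegral.sum_integral_adjacent_intervals hint, ← Finset.sum_sub_distrib]
  calc _ ≤ ∑ k ∈ Finset.range N, |(∫ x in t k..t (k + 1), w x * ψ x) -
        ψ (t k) * ∫ x in t k..t (k + 1), w x| := Finset.abs_sum_le_sum_abs _ _
    _ ≤ ∑ k ∈ Finset.range N, C * δ * (t (k + 1) - t k) :=
        Finset.sum_le_sum fun k hk => hterm k (Finset.mem_range.1 hk)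
    _ = C * (t N - t 0) * δ := by rw [← Finset.mul_sum, Finset.sum_range_sub]; ring

end RiemannSum

theorem tendsto_intervalIntegral_mul_of_tendsto_intervalIntegral {ι : Type*} {l : Filter ι}
    {w : ι → ℝ → ℝ} {w₀ : ℝ → ℝ} {C : ℝ}
    (hw : ∀ i c d, IntervalIntegrable (w i) volume c d)
    (hw₀ : ∀ c d, IntervalIntegrable w₀ volume c d)
    (hC : ∀ i x, |w i x| ≤ C) (hC₀ : ∀ x, |w₀ x| ≤ C)
    (hlim : ∀ c d, Tendsto (fun i => ∫ x in c..d, w i x) l (𝓝 (∫ x in c..d, w₀ x)))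
    {ψ : ℝ → ℝ} {a b : ℝ} (hab : a ≤ b) (hψ : ContinuousOn ψ (Icc a b)) :
    Tendsto (fun i => ∫ x in a..b, w i x * ψ x) l (𝓝 (∫ x in a..b, w₀ x * ψ x)) := by
  refine tendsto_of_forall_approx (C * (b - a)) fun δ hδ => ?_
  obtain ⟨N, t, ht, rfl, rfl, hosc⟩ := exists_partition_forall_abs_sub_le hab hψ hδ
  refine ⟨fun i => ∑ k ∈ Finset.range N, ψ (t k) * ∫ x in t k..t (k + 1), w i x,
    ∑ k ∈ Finset.range N, ψ (t k) * ∫ x in t k..t (k + 1), w₀ x,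
    tendsto_finsetSum _ fun k _ => (hlim _ _).const_mul _, ?_, Eventually.of_forall fun i => ?_⟩
  · rw [dist_comm, Real.dist_eq]
    exact abs_intervalIntegral_mul_sub_sum_le ht hw₀ hC₀ hψ hosc
  · rw [Real.dist_eq]
    exact abs_intervalIntegral_mul_sub_sum_le ht (hw i) (hC i) hψ hosc

theorem dist_integral_mul_le {X : Type*} [MeasurableSpace X] {μ : Measure X}
    {w φ ψ : X → ℝ} {C : ℝ} (hw : AEStronglyMeasurable w μ) (hC : ∀ x, |w x| ≤ C)
    (hφ : Integrable φ μ) (hψ : Integrable ψ μ) :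
    dist (∫ x, w x * φ x ∂μ) (∫ x, w x * ψ x ∂μ) ≤ C * ∫ x, ‖φ x - ψ x‖ ∂μ := by
  have hwC : ∀ᵐ x ∂μ, ‖w x‖ ≤ C := ae_of_all _ hC
  rw [dist_eq_norm, ← integral_sub (hφ.bdd_mul hw hwC) (hψ.bdd_mul hw hwC),
    ← integral_const_mul]
  refine norm_integral_le_of_norm_le ((hφ.sub hψ).norm.const_mul C) (ae_of_all _ fun x => ?_)
  rw [← mul_sub, norm_mul]
  exact mul_le_mul_of_nonneg_right (hC x) (norm_nonneg _)

theorem tendsto_integral_mul_of_forall_hasCompactSupport {ι X : Type*} [TopologicalSpace X]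
    [NormalSpace X] [R1Space X] [WeaklyLocallyCompactSpace X] [MeasurableSpace X] [BorelSpace X]
    {μ : Measure X} [μ.Regular] {l : Filter ι} {w : ι → X → ℝ} {w₀ : X → ℝ} {C : ℝ}
    (hw : ∀ i, AEStronglyMeasurable (w i) μ) (hw₀ : AEStronglyMeasurable w₀ μ)
    (hC : ∀ i x, |w i x| ≤ C) (hC₀ : ∀ x, |w₀ x| ≤ C)
    (hlim : ∀ ψ : X → ℝ, Continuous ψ → HasCompactSupport ψ →
      Tendsto (fun i => ∫ x, w i x * ψ x ∂μ) l (𝓝 (∫ x, w₀ x * ψ x ∂μ)))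
    {φ : X → ℝ} (hφ : Integrable φ μ) :
    Tendsto (fun i => ∫ x, w i x * φ x ∂μ) l (𝓝 (∫ x, w₀ x * φ x ∂μ)) := by
  refine tendsto_of_forall_approx |C| fun δ hδ => ?_
  obtain ⟨ψ, hψs, hφψ, hψc, hψ⟩ := hφ.exists_hasCompactSupport_integral_sub_le hδ
  have hCδ : C * ∫ x, ‖φ x - ψ x‖ ∂μ ≤ |C| * δ :=
    mul_le_mul (le_abs_self C) hφψ (integral_nonneg fun _ => norm_nonneg _) (abs_nonneg C)
  refine ⟨_, _, hlim ψ hψc hψs, ?_, Eventually.of_forall fun i => ?_⟩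
  · rw [dist_comm]
    exact (dist_integral_mul_le hw₀ hC₀ hφ hψ).trans hCδ
  · exact (dist_integral_mul_le (hw i) (hC i) hφ hψ).trans hCδ

namespace Function.Periodic

variable {h : ℝ → ℝ} {L : ℝ}

theorem periodic_intervalIntegral_sub_mul_average (hh : Periodic h L) (hL : L ≠ 0)
    (hint : IntervalIntegrable h volume 0 L) :
    Periodic (fun x => (∫ t in 0..x, h t) - x * ⨍ t in 0..L, h t) L := fun x => by
  simp only
  rw [hh.intervalIntegral_add_eq_add 0 x (hh.intervalIntegrable₀ hL hint), interval_average_eq,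
    zero_add, sub_zero, smul_eq_mul]
  field_simp
  ring

theorem tendsto_intervalIntegral_comp_div (hh : Periodic h L) (hL : L ≠ 0)
    (hint : IntervalIntegrable h volume 0 L) (a b : ℝ) :
    Tendsto (fun ε => ∫ t in a..b, h (t / ε)) (𝓝[≠] 0) (𝓝 ((b - a) * ⨍ t in 0..L, h t)) := by
  set m := ⨍ t in 0..L, h t
  set P : ℝ → ℝ := fun x => (∫ t in 0..x, h t) - x * m
  have hint' := hh.intervalIntegrable₀ hL hint
  obtain ⟨K, hK⟩ := isBounded_iff_forall_norm_le.1 <|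
    (hh.periodic_intervalIntegral_sub_mul_average hL hint).isBounded_of_continuous hL
      ((intervalIntegral.continuous_primitive hint' 0).sub (continuous_id.mul continuous_const))
  have hP : ∀ x, |P x| ≤ K := fun x => hK _ (mem_range_self x)
  have heq : ∀ ε ≠ 0, ∫ t in a..b, h (t / ε) = (b - a) * m + ε * (P (b / ε) - P (a / ε)) := by
    intro ε hε
    rw [intervalIntegral.integral_comp_div h hε,
      ← intervalIntegral.integral_interval_sub_left (hint' 0 _) (hint' 0 _), smul_eq_mul]
    simp only [P]
    field_simp
    ring
  have hsmall : Tendsto (fun ε => ε * (P (b / ε) - P (a / ε))) (𝓝[≠] 0) (𝓝 0) := by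
    refine squeeze_zero_norm (a := fun ε => |ε| * (2 * K)) (fun ε => ?_) ?_
    · rw [Real.norm_eq_abs, abs_mul]
      gcongr
      linarith [abs_sub (P (b / ε)) (P (a / ε)), hP (b / ε), hP (a / ε)]
    · have : Tendsto (fun ε : ℝ => |ε| * (2 * K)) (𝓝 0) (𝓝 (|0| * (2 * K))) :=
        (continuous_abs.mul continuous_const).tendsto 0
      rw [abs_zero, zero_mul] at this
      exact this.mono_left nhdsWithin_le_nhds
  have hlim := (tendsto_const_nhds (x := (b - a) * m)).add hsmall
  rw [add_zero] at hlim
  exact hlim.congr' (eventually_mem_nhdsWithin.mono fun ε hε => (heq ε hε).symm)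

theorem tendsto_setIntegral_comp_div_mul (hh : Periodic h L) (hL : L ≠ 0) (hm : Measurable h)
    {C : ℝ} (hC : ∀ x, |h x| ≤ C) {s : Set ℝ} (hs : MeasurableSet s) {φ : ℝ → ℝ}
    (hφ : IntegrableOn φ s) :
    Tendsto (fun ε => ∫ t in s, h (t / ε) * φ t) (𝓝[≠] 0)
      (𝓝 ((⨍ t in 0..L, h t) * ∫ t in s, φ t)) := by
  set m := ⨍ t in 0..L, h t
  have hint : ∀ f : ℝ → ℝ, Measurable f → (∀ x, |f x| ≤ C) →
      ∀ c d, IntervalIntegrable f volume c d := fun f hf hfC c d =>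
    intervalIntegrable_const.mono_fun' hf.aestronglyMeasurable (ae_of_all _ hfC)
  have hmε : ∀ ε, Measurable fun t => h (t / ε) := fun ε => hm.comp (measurable_id.div_const ε)
  have hmC : |m| ≤ C := abs_intervalAverage_le hC
  simp only [← integral_indicator hs, indicator_mul_right, ← integral_const_mul]
  refine tendsto_integral_mul_of_forall_hasCompactSupport (w₀ := fun _ => m)
    (fun ε => (hmε ε).aestronglyMeasurable) aestronglyMeasurable_const (fun ε x => hC _)
    (fun _ => hmC) (fun ψ hψc hψs => ?_) (hφ.integrable_indicator hs)
  obtain ⟨R, hR⟩ := hψs.isCompact.isBounded.subset_closedBall 0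
  have hsupp : ∀ w : ℝ → ℝ, support (fun t => w t * ψ t) ⊆ Ioc (-(|R| + 1)) |R| := by
    intro w t ht
    have := hR (subset_tsupport _ (support_mul_subset_right _ _ ht))
    rw [mem_closedBall_zero_iff, Real.norm_eq_abs, abs_le] at this
    constructor <;> linarith [le_abs_self R, neg_abs_le R]
  simp only [← intervalIntegral.integral_eq_integral_of_support_subset (hsupp _)]
  refine tendsto_intervalIntegral_mul_of_tendsto_intervalIntegral
    (fun ε => hint _ (hmε ε) fun _ => hC _) (hint _ measurable_const fun _ => hmC)
    (fun ε x => hC _) (fun _ => hmC) (fun c d => ?_) (by linarith [abs_nonneg R])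
    hψc.continuousOn
  simpa [intervalIntegral.integral_const] using hh.tendsto_intervalIntegral_comp_div hL
    (hint h hm hC 0 L) c d

end Function.Periodic

theorem tendsto_integral_prod_mul_of_ae_tendsto_slice {α β ι : Type*} [MeasurableSpace α]
    [MeasurableSpace β] {μ : Measure α} {ν : Measure β} [SFinite μ] [SFinite ν] {l : Filter ι}
    [l.IsCountablyGenerated] {w : ι → α × β → ℝ} {w₀ : α × β → ℝ} {C : ℝ}
    (hw : ∀ i, AEStronglyMeasurable (w i) (μ.prod ν)) (hw₀ : AEStronglyMeasurable w₀ (μ.prod ν))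
    (hC : ∀ i z, |w i z| ≤ C) (hC₀ : ∀ z, |w₀ z| ≤ C)
    (hslice : ∀ᵐ y ∂ν, ∀ φ : α → ℝ, Integrable φ μ →
      Tendsto (fun i => ∫ x, w i (x, y) * φ x ∂μ) l (𝓝 (∫ x, w₀ (x, y) * φ x ∂μ)))
    {φ : α × β → ℝ} (hφ : Integrable φ (μ.prod ν)) :
    Tendsto (fun i => ∫ z, w i z * φ z ∂μ.prod ν) l (𝓝 (∫ z, w₀ z * φ z ∂μ.prod ν)) := by
  have hint : ∀ u : α × β → ℝ, AEStronglyMeasurable u (μ.prod ν) → (∀ z, |u z| ≤ C) →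
      Integrable (fun z => u z * φ z) (μ.prod ν) := fun u hu huC =>
    hφ.bdd_mul hu (ae_of_all _ huC)
  rw [integral_prod_symm _ (hint w₀ hw₀ hC₀)]
  refine Tendsto.congr (fun i => (integral_prod_symm _ (hint _ (hw i) (hC i))).symm) ?_
  refine tendsto_integral_filter_of_dominated_convergence (fun y => ∫ x, C * ‖φ (x, y)‖ ∂μ)
    (Eventually.of_forall fun i => (hint _ (hw i) (hC i)).integral_prod_right.aestronglyMeasurable)
    (Eventually.of_forall fun i => hφ.prod_left_ae.mono fun y hy => ?_)
    (hφ.norm.const_mul C).integral_prod_right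
    ((hslice.and hφ.prod_left_ae).mono fun y hy => hy.1 _ hy.2)
  refine norm_integral_le_of_norm_le (hy.norm.const_mul C) (ae_of_all _ fun x => ?_)
  rw [norm_mul]
  exact mul_le_mul_of_nonneg_right (hC i _) (norm_nonneg _)

theorem chi_oscillating_weak_star_general (L g₁ : ℝ) (hL : 0 < L) (g : ℝ → ℝ)
    (hgc : Continuous g) (hper : ∀ x, g (x + L) = g x)
    (φ : ℝ × ℝ → ℝ)
    (hφ : IntegrableOn φ (Set.Ioo (0:ℝ) 1 ×ˢ Set.Ioo (0:ℝ) g₁)) :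
    Tendsto
      (fun ε : ℝ => ∫ x in Set.Ioo (0:ℝ) 1 ×ˢ Set.Ioo (0:ℝ) g₁,
        (if x.2 < g (x.1 / ε) then (1:ℝ) else 0) * φ x)
      (nhdsWithin 0 (Set.Ioi 0))
      (nhds (∫ x in Set.Ioo (0:ℝ) 1 ×ˢ Set.Ioo (0:ℝ) g₁,
        ((1 / L) * ∫ s in Set.Ioo (0:ℝ) L, if x.2 < g s then (1:ℝ) else 0) * φ x)) := by
  have hΩ : volume.restrict (Ioo (0:ℝ) 1 ×ˢ Ioo (0:ℝ) g₁) =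
      (volume.restrict (Ioo (0:ℝ) 1)).prod (volume.restrict (Ioo (0:ℝ) g₁)) := by
    rw [Measure.volume_eq_prod, Measure.prod_restrict]
  have hχ : Measurable fun p : ℝ × ℝ => if p.1 < g p.2 then (1:ℝ) else 0 :=
    Measurable.ite (measurableSet_lt measurable_fst (hgc.measurable.comp measurable_snd))
      measurable_const measurable_const
  have hχ_le : ∀ y s, |if y < g s then (1:ℝ) else 0| ≤ 1 := fun y s => by split_ifs <;> simp
  have hθ : ∀ y, (1 / L) * ∫ s in Ioo 0 L, (if y < g s then (1:ℝ) else 0) =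
      ⨍ s in 0..L, if y < g s then (1:ℝ) else 0 := fun y => by
    rw [interval_average_eq, intervalIntegral.integral_of_le hL.le, integral_Ioc_eq_integral_Ioo,
      sub_zero, smul_eq_mul, one_div]
  rw [IntegrableOn, hΩ] at hφ
  rw [hΩ]
  refine tendsto_integral_prod_mul_of_ae_tendsto_slice (C := 1)
    (w := fun ε x => if x.2 < g (x.1 / ε) then (1:ℝ) else 0)
    (w₀ := fun x => (1 / L) * ∫ s in Ioo 0 L, if x.2 < g s then (1:ℝ) else 0)
    (fun ε => (hχ.comp (measurable_snd.prodMk (measurable_fst.div_const ε))).aestronglyMeasurable)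
    (((StronglyMeasurable.integral_prod_right (f := fun y s => if y < g s then (1:ℝ) else 0)
      (ν := volume.restrict (Ioo 0 L)) hχ.stronglyMeasurable).measurable.const_mul (1 / L)).comp
      measurable_snd).aestronglyMeasurable
    (fun ε x => hχ_le _ _) (fun x => hθ x.2 ▸ abs_intervalAverage_le (hχ_le x.2))
    (ae_of_all _ fun y ψ hψ => ?_) hφ
  have hperiodic : Function.Periodic (fun s => if y < g s then (1:ℝ) else 0) L := fun s => by
    simp only [hper]
  simp only [integral_const_mul, hθ]
  exact (hperiodic.tendsto_setIntegral_comp_div_mul hL.ne' (hχ.comp measurable_prodMk_left)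
      (hχ_le y) measurableSet_Ioo hψ).mono_left (nhdsWithin_mono _ fun ε hε => ne_of_gt hε)

/-- Weak-* convergence in `L^∞(Ω)` of the characteristic functions of the
oscillating domains `Ω^ε = {(x₁,x₂) : 0 < x₁ < 1, 0 < x₂ < g(x₁/ε)}`
to `θ(x₂) = (1/L) ∫_0^L χ_{Y*}(s,x₂) ds`, where `Ω = (0,1) × (0,g₁)`. -/
theorem chi_oscillating_weak_star (L g₀ g₁ : ℝ) (hL : 0 < L) (g : ℝ → ℝ)
    (hgc : Continuous g) (hper : ∀ x, g (x + L) = g x)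
    (hg₀ : 0 < g₀) (hlb : ∀ x, g₀ ≤ g x) (hub : ∀ x, g x ≤ g₁)
    (φ : ℝ × ℝ → ℝ)
    (hφ : IntegrableOn φ (Set.Ioo (0:ℝ) 1 ×ˢ Set.Ioo (0:ℝ) g₁)) :
    Tendsto
      (fun ε : ℝ => ∫ x in Set.Ioo (0:ℝ) 1 ×ˢ Set.Ioo (0:ℝ) g₁,
        (if x.2 < g (x.1 / ε) then (1:ℝ) else 0) * φ x)
      (nhdsWithin 0 (Set.Ioi 0))
      (nhds (∫ x in Set.Ioo (0:ℝ) 1 ×ˢ Set.Ioo (0:ℝ) g₁,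
        ((1 / L) * ∫ s in Set.Ioo (0:ℝ) L, if x.2 < g s then (1:ℝ) else 0) * φ x)) :=
  chi_oscillating_weak_star_general L g₁ hL g hgc hper φ hφ
end
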